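/- arXiv:1709.03320 — 2 statements merged into one kernel-verified Lean document; each statement's English description precedes it below -/
import Mathlib

section
/- For every positive integer n, ∑_{σ ∈ B_n} (−1)^{ℓ_B(σ)} x^{eneg(σ)} y^{oinv(σ)} z^{onsp(σ)} equals (1−x)(z^{n/2} − y^{n/2}) · ∏_{i=1}^{⌊(n−1)/2⌋}(1 − x z^{2i})(1 − y^{2i}) if n is even, and equals 0 if n is odd. -/
open Finset

/-- The hyperoctahedral group `B_n` of signed permutations, encoded as a pair
consisting of the underlying permutation of positions and the signs of the entries. -/
abbrev BG (n : ℕ) := Equiv.Perm (Fin n) × (Fin n → Bool)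

/-- The window notation value `σ(i)` (1-based values, 0-based positions). -/
def wval {n : ℕ} (σ : BG n) (i : Fin n) : ℤ :=
  (if σ.2 i then -1 else 1) * ((σ.1 i : ℤ) + 1)

def pairsF (n : ℕ) : Finset (Fin n × Fin n) := univ.filter fun p => p.1 < p.2

/-- number of inversions -/
def invB {n : ℕ} (σ : BG n) : ℕ :=
  ((pairsF n).filter fun p => wval σ p.2 < wval σ p.1).card

/-- number of odd inversions -/
def oinvB {n : ℕ} (σ : BG n) : ℕ :=
  ((pairsF n).filter fun p => wval σ p.2 < wval σ p.1 ∧ (p.2.val - p.1.val) % 2 = 1).card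

/-- number of even inversions -/
def einvB {n : ℕ} (σ : BG n) : ℕ :=
  ((pairsF n).filter fun p => wval σ p.2 < wval σ p.1 ∧ (p.2.val - p.1.val) % 2 = 0).card

/-- number of negative sum pairs -/
def nspB {n : ℕ} (σ : BG n) : ℕ :=
  ((pairsF n).filter fun p => wval σ p.1 + wval σ p.2 < 0).card

/-- number of odd negative sum pairs -/
def onspB {n : ℕ} (σ : BG n) : ℕ :=
  ((pairsF n).filter fun p => wval σ p.1 + wval σ p.2 < 0 ∧ (p.2.val - p.1.val) % 2 = 1).card

/-- number of even negative sum pairs -/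
def enspB {n : ℕ} (σ : BG n) : ℕ :=
  ((pairsF n).filter fun p => wval σ p.1 + wval σ p.2 < 0 ∧ (p.2.val - p.1.val) % 2 = 0).card

/-- number of negative entries -/
def nnegB {n : ℕ} (σ : BG n) : ℕ :=
  (univ.filter fun i : Fin n => wval σ i < 0).card

/-- number of negative entries in odd (1-based) positions -/
def onegB {n : ℕ} (σ : BG n) : ℕ :=
  (univ.filter fun i : Fin n => wval σ i < 0 ∧ (i.val + 1) % 2 = 1).card

/-- number of negative entries in even (1-based) positions -/
def enegB {n : ℕ} (σ : BG n) : ℕ :=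
  (univ.filter fun i : Fin n => wval σ i < 0 ∧ (i.val + 1) % 2 = 0).card

/-- Coxeter length of type B -/
def lenB {n : ℕ} (σ : BG n) : ℕ := invB σ + nnegB σ + nspB σ

/-- Coxeter length of type D -/
def lenD {n : ℕ} (σ : BG n) : ℕ := invB σ + nspB σ

section Aux

variable {R : Type*} [CommRing R]

/-- negatives in class-true positions -/
def negF {n : ℕ} (σ : BG n) (P : Fin n → Bool) : ℕ :=
  (univ.filter fun i : Fin n => wval σ i < 0 ∧ P i = true).card

/-- cross-class inversions -/
def cinvF {n : ℕ} (σ : BG n) (P : Fin n → Bool) : ℕ :=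
  ((pairsF n).filter fun q => wval σ q.2 < wval σ q.1 ∧ P q.1 ≠ P q.2).card

/-- cross-class negative sum pairs -/
def cnspF {n : ℕ} (σ : BG n) (P : Fin n → Bool) : ℕ :=
  ((pairsF n).filter fun q => wval σ q.1 + wval σ q.2 < 0 ∧ P q.1 ≠ P q.2).card

def G (n : ℕ) (P : Fin n → Bool) (x y z : R) : R :=
  ∑ σ : BG n, (-1 : R) ^ lenB σ * x ^ negF σ P * y ^ cinvF σ P * z ^ cnspF σ P

def ccF {n : ℕ} (p : Fin (n+1)) (P : Fin (n+1) → Bool) : ℕ :=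
  (univ.filter fun j : Fin n => p < p.succAbove j ∧ P (p.succAbove j) ≠ P p).card

def ddF {n : ℕ} (p : Fin (n+1)) (P : Fin (n+1) → Bool) : ℕ :=
  (univ.filter fun j : Fin n => p.succAbove j < p ∧ P (p.succAbove j) ≠ P p).card

/-- insertion of value ±(n+1) at position p -/
def ins {n : ℕ} (p : Fin (n+1)) (ε : Bool) (τ : BG n) : BG (n+1) :=
  ⟨((finSuccEquiv' p).trans τ.1.optionCongr).trans (finSuccEquiv' (Fin.last n)).symm,
   fun j => ((finSuccEquiv' p) j).elim ε τ.2⟩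

variable {n : ℕ} (p : Fin (n+1)) (ε : Bool) (τ : BG n)

lemma ins_apply_self : (ins p ε τ).1 p = Fin.last n := by
  simp [ins, finSuccEquiv'_at]

lemma ins_apply_succAbove (i : Fin n) :
    (ins p ε τ).1 (p.succAbove i) = (τ.1 i).castSucc := by
  simp [ins, finSuccEquiv'_succAbove, finSuccEquiv'_symm_some, Fin.succAbove_last]

lemma ins_sign_self : (ins p ε τ).2 p = ε := by
  simp [ins, finSuccEquiv'_at]

lemma ins_sign_succAbove (i : Fin n) : (ins p ε τ).2 (p.succAbove i) = τ.2 i := by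
  simp [ins, finSuccEquiv'_succAbove]

lemma ins_wval_self :
    wval (ins p ε τ) p = (if ε then -1 else 1) * ((n : ℤ) + 1) := by
  rw [wval, ins_sign_self, ins_apply_self]
  simp

lemma ins_wval_succAbove (i : Fin n) :
    wval (ins p ε τ) (p.succAbove i) = wval τ i := by
  rw [wval, wval, ins_sign_succAbove, ins_apply_succAbove]
  simp

lemma wval_lt {n : ℕ} (τ : BG n) (i : Fin n) : wval τ i < (n : ℤ) + 1 := by
  have h := (τ.1 i).isLt
  rw [wval]
  split <;> nlinarith [h, Int.ofNat_lt.2 h]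

lemma neg_lt_wval {n : ℕ} (τ : BG n) (i : Fin n) : -((n : ℤ) + 1) < wval τ i := by
  have h := (τ.1 i).isLt
  rw [wval]
  split <;> nlinarith [h, Int.ofNat_lt.2 h]

lemma ins_bijective {n : ℕ} :
    Function.Bijective (fun t : (Fin (n+1) × Bool) × BG n => ins t.1.1 t.1.2 t.2) := by
  rw [Fintype.bijective_iff_injective_and_card]
  constructor
  · rintro ⟨⟨p, ε⟩, τ⟩ ⟨⟨p', ε'⟩, τ'⟩ h
    simp only at h
    have h1 : (ins p ε τ).1 = (ins p' ε' τ').1 := by rw [h]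
    have h2 : (ins p ε τ).2 = (ins p' ε' τ').2 := by rw [h]
    have hp : p = p' := by
      have e1 : (ins p ε τ).1 p = Fin.last n := ins_apply_self p ε τ
      have e2 : (ins p ε τ).1 p' = Fin.last n := by
        rw [h1]; exact ins_apply_self p' ε' τ'
      exact (ins p ε τ).1.injective (e1.trans e2.symm)
    subst hp
    have hε : ε = ε' := by
      have := congrFun h2 p
      rwa [ins_sign_self, ins_sign_self] at this
    have hτ1 : τ.1 = τ'.1 := by
      apply Equiv.ext
      intro i
      have hap : (ins p ε τ).1 (p.succAbove i) = (ins p ε' τ').1 (p.succAbove i) := by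
        rw [h1]
      rw [ins_apply_succAbove, ins_apply_succAbove] at hap
      exact Fin.castSucc_injective _ hap
    have hτ2 : τ.2 = τ'.2 := by
      funext i
      have := congrFun h2 (p.succAbove i)
      rwa [ins_sign_succAbove, ins_sign_succAbove] at this
    simp [hε, Prod.ext_iff, hτ1, hτ2]
  · simp [Fintype.card_perm, Nat.factorial_succ]
    ring

lemma card_pairs_split {N : ℕ} (p : Fin (N+1)) (C : Fin (N+1) → Fin (N+1) → Prop)
    [∀ a b, Decidable (C a b)] :
    ((pairsF (N+1)).filter fun q => C q.1 q.2).card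
      = ((pairsF N).filter fun q => C (p.succAbove q.1) (p.succAbove q.2)).card
        + ((univ.filter fun j : Fin N => p < p.succAbove j ∧ C p (p.succAbove j)).card
          + (univ.filter fun j : Fin N => p.succAbove j < p ∧ C (p.succAbove j) p).card) := by
  simp only [pairsF, filter_filter, card_filter, Fintype.sum_prod_type]
  rw [Fin.sum_univ_succAbove (fun a => ∑ b : Fin (N+1), if a < b ∧ C a b then 1 else 0) p]
  rw [Fin.sum_univ_succAbove (fun b => if p < b ∧ C p b then 1 else 0) p]
  simp only [lt_irrefl, false_and, if_false, zero_add]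
  have hrow : ∀ i : Fin N,
      (∑ b : Fin (N+1), if p.succAbove i < b ∧ C (p.succAbove i) b then 1 else 0)
      = (if p.succAbove i < p ∧ C (p.succAbove i) p then 1 else 0)
        + ∑ j : Fin N, if i < j ∧ C (p.succAbove i) (p.succAbove j) then 1 else 0 := by
    intro i
    rw [Fin.sum_univ_succAbove (fun b => if p.succAbove i < b ∧ C (p.succAbove i) b then 1 else 0) p]
    congr 1
    apply Finset.sum_congr rfl
    intro j _
    simp only [Fin.succAbove_lt_succAbove_iff]
  rw [Finset.sum_congr rfl (fun i _ => hrow i), Finset.sum_add_distrib]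
  ring

lemma card_succAbove_lt {N : ℕ} (p : Fin (N+1)) :
    (univ.filter fun j : Fin N => p.succAbove j < p).card = p.val := by
  have h : ∀ j : Fin N, (p.succAbove j < p) ↔ (j.val < p.val) := by
    intro j
    rw [Fin.succAbove_lt_iff_castSucc_lt]
    exact Iff.rfl
  rw [filter_congr (fun j _ => by rw [h j])]
  rw [card_filter, Fin.sum_univ_eq_sum_range (fun i => if i < p.val then 1 else 0) N,
    ← card_filter]
  have : (range N).filter (fun i => i < p.val) = range p.val := by
    ext i
    simp only [mem_filter, mem_range]
    have := p.isLt
    omega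
  rw [this, card_range]

lemma card_succAbove_gt {N : ℕ} (p : Fin (N+1)) :
    (univ.filter fun j : Fin N => p < p.succAbove j).card = N - p.val := by
  have h : ∀ j : Fin N, (p < p.succAbove j) ↔ (p.val ≤ j.val) := by
    intro j
    rw [Fin.lt_succAbove_iff_le_castSucc]
    exact Iff.rfl
  rw [filter_congr (fun j _ => by rw [h j])]
  rw [card_filter, Fin.sum_univ_eq_sum_range (fun i => if p.val ≤ i then 1 else 0) N,
    ← card_filter]
  have : (range N).filter (fun i => p.val ≤ i) = (range N) \ range p.val := by
    ext i
    simp only [mem_filter, mem_range, mem_sdiff]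
    omega
  rw [this, card_sdiff_of_subset (by intro i hi; simp only [mem_range] at *; have := p.isLt; omega),
    card_range, card_range]

lemma invB_ins : invB (ins p ε τ) = invB τ + (if ε then p.val else n - p.val) := by
  have hb : ∀ i : Fin n, wval (ins p ε τ) (p.succAbove i) = wval τ i := ins_wval_succAbove p ε τ
  have hw := ins_wval_self p ε τ
  rw [invB, card_pairs_split p (fun a b => wval (ins p ε τ) b < wval (ins p ε τ) a)]
  have hτ : ((pairsF n).filter fun q =>
      wval (ins p ε τ) (p.succAbove q.2) < wval (ins p ε τ) (p.succAbove q.1)).card = invB τ := by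
    rw [invB]; congr 1; apply filter_congr; intro q _; rw [hb, hb]
  rw [hτ]
  congr 1
  cases ε with
  | false =>
    have h2 : (univ.filter fun j : Fin n =>
        p < p.succAbove j ∧ wval (ins p false τ) (p.succAbove j) < wval (ins p false τ) p).card
        = n - p.val := by
      rw [← card_succAbove_gt p]
      congr 1
      apply filter_congr
      intro j _
      rw [hb, hw]
      have := wval_lt τ j
      simp only [if_false, Bool.false_eq_true, one_mul]
      constructor
      · exact fun h => h.1
      · exact fun h => ⟨h, by omega⟩
    have h3 : (univ.filter fun j : Fin n =>
        p.succAbove j < p ∧ wval (ins p false τ) p < wval (ins p false τ) (p.succAbove j)).card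
        = 0 := by
      rw [card_eq_zero, filter_eq_empty_iff]
      intro j _
      rw [hb, hw]
      have := wval_lt τ j
      simp only [if_false, Bool.false_eq_true, one_mul]
      rintro ⟨-, hc⟩
      omega
    rw [h2, h3]
    simp
  | true =>
    have h2 : (univ.filter fun j : Fin n =>
        p < p.succAbove j ∧ wval (ins p true τ) (p.succAbove j) < wval (ins p true τ) p).card
        = 0 := by
      rw [card_eq_zero, filter_eq_empty_iff]
      intro j _
      rw [hb, hw]
      have := neg_lt_wval τ j
      simp only [if_true]
      rintro ⟨-, hc⟩
      omega
    have h3 : (univ.filter fun j : Fin n =>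
        p.succAbove j < p ∧ wval (ins p true τ) p < wval (ins p true τ) (p.succAbove j)).card
        = p.val := by
      rw [← card_succAbove_lt p]
      congr 1
      apply filter_congr
      intro j _
      rw [hb, hw]
      have := neg_lt_wval τ j
      simp only [if_true]
      constructor
      · exact fun h => h.1
      · exact fun h => ⟨h, by omega⟩
    rw [h2, h3]
    simp

lemma nnegB_ins : nnegB (ins p ε τ) = nnegB τ + (if ε then 1 else 0) := by
  rw [nnegB, card_filter,
    Fin.sum_univ_succAbove (fun i => if wval (ins p ε τ) i < 0 then 1 else 0) p, add_comm,
    nnegB, card_filter]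
  congr 1
  · apply Finset.sum_congr rfl
    intro i _
    rw [ins_wval_succAbove]
  · rw [ins_wval_self]
    have hn : (0:ℤ) < (n:ℤ) + 1 := by positivity
    cases ε <;> simp <;> omega

lemma nspB_ins : nspB (ins p ε τ) = nspB τ + (if ε then n else 0) := by
  have hb : ∀ i : Fin n, wval (ins p ε τ) (p.succAbove i) = wval τ i := ins_wval_succAbove p ε τ
  have hw := ins_wval_self p ε τ
  rw [nspB, card_pairs_split p (fun a b => wval (ins p ε τ) a + wval (ins p ε τ) b < 0)]
  have hτ : ((pairsF n).filter fun q =>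
      wval (ins p ε τ) (p.succAbove q.1) + wval (ins p ε τ) (p.succAbove q.2) < 0).card
      = nspB τ := by
    rw [nspB]; congr 1; apply filter_congr; intro q _; rw [hb, hb]
  rw [hτ]
  have hp := p.isLt
  cases ε with
  | false =>
    have h2 : (univ.filter fun j : Fin n =>
        p < p.succAbove j ∧ wval (ins p false τ) p + wval (ins p false τ) (p.succAbove j) < 0).card
        = 0 := by
      rw [card_eq_zero, filter_eq_empty_iff]
      intro j _
      rw [hb, hw]
      have := neg_lt_wval τ j
      simp only [if_false, Bool.false_eq_true, one_mul]
      rintro ⟨-, hc⟩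
      omega
    have h3 : (univ.filter fun j : Fin n =>
        p.succAbove j < p ∧ wval (ins p false τ) (p.succAbove j) + wval (ins p false τ) p < 0).card
        = 0 := by
      rw [card_eq_zero, filter_eq_empty_iff]
      intro j _
      rw [hb, hw]
      have := neg_lt_wval τ j
      simp only [if_false, Bool.false_eq_true, one_mul]
      rintro ⟨-, hc⟩
      omega
    rw [h2, h3]
    simp
  | true =>
    have h2 : (univ.filter fun j : Fin n =>
        p < p.succAbove j ∧ wval (ins p true τ) p + wval (ins p true τ) (p.succAbove j) < 0).card
        = n - p.val := by
      rw [← card_succAbove_gt p]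
      congr 1
      apply filter_congr
      intro j _
      rw [hb, hw]
      have := wval_lt τ j
      simp only [if_true]
      constructor
      · exact fun h => h.1
      · exact fun h => ⟨h, by omega⟩
    have h3 : (univ.filter fun j : Fin n =>
        p.succAbove j < p ∧ wval (ins p true τ) (p.succAbove j) + wval (ins p true τ) p < 0).card
        = p.val := by
      rw [← card_succAbove_lt p]
      congr 1
      apply filter_congr
      intro j _
      rw [hb, hw]
      have := wval_lt τ j
      simp only [if_true]
      constructor
      · exact fun h => h.1
      · exact fun h => ⟨h, by omega⟩
    rw [h2, h3]
    simp
    omega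

lemma lenB_ins : lenB (ins p ε τ) = lenB τ + (if ε then p.val + n + 1 else n - p.val) := by
  have h := p.isLt
  rw [lenB, lenB, invB_ins, nnegB_ins, nspB_ins]
  rcases ε <;> simp <;> omega

variable (P : Fin (n+1) → Bool)

lemma negF_ins : negF (ins p ε τ) P
    = negF τ (fun i => P (p.succAbove i)) + (if ε then (if P p then 1 else 0) else 0) := by
  rw [negF, card_filter,
    Fin.sum_univ_succAbove (fun i => if (wval (ins p ε τ) i < 0 ∧ P i = true) then 1 else 0) p,
    add_comm, negF, card_filter]
  congr 1
  · apply Finset.sum_congr rfl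
    intro i _
    rw [ins_wval_succAbove]
  · rw [ins_wval_self]
    have hn : (0:ℤ) < (n:ℤ) + 1 := by positivity
    cases ε with
    | false =>
      simp only [if_false, Bool.false_eq_true, one_mul]
      rw [if_neg]
      rintro ⟨hc, -⟩
      omega
    | true =>
      simp only [if_true]
      have hneg : (-1 : ℤ) * ((n:ℤ)+1) < 0 := by omega
      cases hP : P p <;> simp [hP, hneg] <;> omega

lemma cinvF_ins : cinvF (ins p ε τ) P
    = cinvF τ (fun i => P (p.succAbove i)) + (if ε then ddF p P else ccF p P) := by
  have hb : ∀ i : Fin n, wval (ins p ε τ) (p.succAbove i) = wval τ i := ins_wval_succAbove p ε τ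
  have hw := ins_wval_self p ε τ
  rw [cinvF, card_pairs_split p
    (fun a b => wval (ins p ε τ) b < wval (ins p ε τ) a ∧ P a ≠ P b)]
  have hτ : ((pairsF n).filter fun q =>
      wval (ins p ε τ) (p.succAbove q.2) < wval (ins p ε τ) (p.succAbove q.1)
        ∧ P (p.succAbove q.1) ≠ P (p.succAbove q.2)).card
      = cinvF τ (fun i => P (p.succAbove i)) := by
    rw [cinvF]; congr 1; apply filter_congr; intro q _; rw [hb, hb]
  rw [hτ]
  congr 1
  cases ε with
  | false =>
    have h2 : (univ.filter fun j : Fin n =>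
        p < p.succAbove j ∧ (wval (ins p false τ) (p.succAbove j) < wval (ins p false τ) p
          ∧ P p ≠ P (p.succAbove j))).card = ccF p P := by
      rw [ccF]
      congr 1
      apply filter_congr
      intro j _
      rw [hb, hw]
      have := wval_lt τ j
      simp only [if_false, Bool.false_eq_true, one_mul]
      constructor
      · rintro ⟨h1, -, h3⟩; exact ⟨h1, h3.symm⟩
      · rintro ⟨h1, h3⟩; exact ⟨h1, by omega, h3.symm⟩
    have h3 : (univ.filter fun j : Fin n =>
        p.succAbove j < p ∧ (wval (ins p false τ) p < wval (ins p false τ) (p.succAbove j)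
          ∧ P (p.succAbove j) ≠ P p)).card = 0 := by
      rw [card_eq_zero, filter_eq_empty_iff]
      intro j _
      rw [hb, hw]
      have := wval_lt τ j
      simp only [if_false, Bool.false_eq_true, one_mul]
      rintro ⟨-, hc, -⟩
      omega
    rw [h2, h3]
    simp
  | true =>
    have h2 : (univ.filter fun j : Fin n =>
        p < p.succAbove j ∧ (wval (ins p true τ) (p.succAbove j) < wval (ins p true τ) p
          ∧ P p ≠ P (p.succAbove j))).card = 0 := by
      rw [card_eq_zero, filter_eq_empty_iff]
      intro j _
      rw [hb, hw]
      have := neg_lt_wval τ j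
      simp only [if_true]
      rintro ⟨-, hc, -⟩
      omega
    have h3 : (univ.filter fun j : Fin n =>
        p.succAbove j < p ∧ (wval (ins p true τ) p < wval (ins p true τ) (p.succAbove j)
          ∧ P (p.succAbove j) ≠ P p)).card = ddF p P := by
      rw [ddF]
      congr 1
      apply filter_congr
      intro j _
      rw [hb, hw]
      have := neg_lt_wval τ j
      simp only [if_true]
      constructor
      · rintro ⟨h1, -, h3⟩; exact ⟨h1, h3⟩
      · rintro ⟨h1, h3⟩; exact ⟨h1, by omega, h3⟩
    rw [h2, h3]
    simp

lemma cnspF_ins : cnspF (ins p ε τ) P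
    = cnspF τ (fun i => P (p.succAbove i)) + (if ε then ccF p P + ddF p P else 0) := by
  have hb : ∀ i : Fin n, wval (ins p ε τ) (p.succAbove i) = wval τ i := ins_wval_succAbove p ε τ
  have hw := ins_wval_self p ε τ
  rw [cnspF, card_pairs_split p
    (fun a b => wval (ins p ε τ) a + wval (ins p ε τ) b < 0 ∧ P a ≠ P b)]
  have hτ : ((pairsF n).filter fun q =>
      wval (ins p ε τ) (p.succAbove q.1) + wval (ins p ε τ) (p.succAbove q.2) < 0
        ∧ P (p.succAbove q.1) ≠ P (p.succAbove q.2)).card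
      = cnspF τ (fun i => P (p.succAbove i)) := by
    rw [cnspF]; congr 1; apply filter_congr; intro q _; rw [hb, hb]
  rw [hτ]
  congr 1
  cases ε with
  | false =>
    have h2 : (univ.filter fun j : Fin n =>
        p < p.succAbove j ∧ (wval (ins p false τ) p + wval (ins p false τ) (p.succAbove j) < 0
          ∧ P p ≠ P (p.succAbove j))).card = 0 := by
      rw [card_eq_zero, filter_eq_empty_iff]
      intro j _
      rw [hb, hw]
      have := neg_lt_wval τ j
      simp only [if_false, Bool.false_eq_true, one_mul]
      rintro ⟨-, hc, -⟩
      omega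
    have h3 : (univ.filter fun j : Fin n =>
        p.succAbove j < p ∧ (wval (ins p false τ) (p.succAbove j) + wval (ins p false τ) p < 0
          ∧ P (p.succAbove j) ≠ P p)).card = 0 := by
      rw [card_eq_zero, filter_eq_empty_iff]
      intro j _
      rw [hb, hw]
      have := neg_lt_wval τ j
      simp only [if_false, Bool.false_eq_true, one_mul]
      rintro ⟨-, hc, -⟩
      omega
    rw [h2, h3]
    simp
  | true =>
    have h2 : (univ.filter fun j : Fin n =>
        p < p.succAbove j ∧ (wval (ins p true τ) p + wval (ins p true τ) (p.succAbove j) < 0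
          ∧ P p ≠ P (p.succAbove j))).card = ccF p P := by
      rw [ccF]
      congr 1
      apply filter_congr
      intro j _
      rw [hb, hw]
      have := wval_lt τ j
      simp only [if_true]
      constructor
      · rintro ⟨h1, -, h3⟩; exact ⟨h1, h3.symm⟩
      · rintro ⟨h1, h3⟩; exact ⟨h1, by omega, h3.symm⟩
    have h3 : (univ.filter fun j : Fin n =>
        p.succAbove j < p ∧ (wval (ins p true τ) (p.succAbove j) + wval (ins p true τ) p < 0
          ∧ P (p.succAbove j) ≠ P p)).card = ddF p P := by
      rw [ddF]
      congr 1
      apply filter_congr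
      intro j _
      rw [hb, hw]
      have := wval_lt τ j
      simp only [if_true]
      constructor
      · rintro ⟨h1, -, h3⟩; exact ⟨h1, h3⟩
      · rintro ⟨h1, h3⟩; exact ⟨h1, by omega, h3⟩
    rw [h2, h3]
    simp

lemma G_succ (n : ℕ) (P : Fin (n+1) → Bool) (x y z : R) :
    G (n+1) P x y z = ∑ p : Fin (n+1),
      ((-1 : R) ^ (n - p.val) * y ^ ccF p P
        + (-1 : R) ^ (p.val + n + 1) * (if P p then x else 1) * y ^ ddF p P
            * z ^ (ccF p P + ddF p P))
      * G n (fun i => P (p.succAbove i)) x y z := by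
  rw [G]
  rw [← Fintype.sum_bijective _ (ins_bijective (n := n))
      (fun t : (Fin (n+1) × Bool) × BG n =>
        (-1 : R) ^ lenB (ins t.1.1 t.1.2 t.2) * x ^ negF (ins t.1.1 t.1.2 t.2) P
          * y ^ cinvF (ins t.1.1 t.1.2 t.2) P * z ^ cnspF (ins t.1.1 t.1.2 t.2) P)
      (fun σ => (-1 : R) ^ lenB σ * x ^ negF σ P * y ^ cinvF σ P * z ^ cnspF σ P)
      (fun t => rfl)]
  rw [Fintype.sum_prod_type]
  rw [Fintype.sum_prod_type]
  apply Finset.sum_congr rfl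
  intro p _
  rw [Fintype.sum_bool]
  have hT : (∑ τ : BG n, (-1 : R) ^ lenB (ins p true τ) * x ^ negF (ins p true τ) P
      * y ^ cinvF (ins p true τ) P * z ^ cnspF (ins p true τ) P)
      = ((-1 : R) ^ (p.val + n + 1) * (if P p then x else 1) * y ^ ddF p P
          * z ^ (ccF p P + ddF p P)) * G n (fun i => P (p.succAbove i)) x y z := by
    rw [G, Finset.mul_sum]
    apply Finset.sum_congr rfl
    intro τ _
    rw [lenB_ins, negF_ins, cinvF_ins, cnspF_ins]
    simp only [if_true]
    rw [pow_add, pow_add, pow_add, pow_add]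
    cases hP : P p <;> simp [hP] <;> ring
  have hF : (∑ τ : BG n, (-1 : R) ^ lenB (ins p false τ) * x ^ negF (ins p false τ) P
      * y ^ cinvF (ins p false τ) P * z ^ cnspF (ins p false τ) P)
      = ((-1 : R) ^ (n - p.val) * y ^ ccF p P) * G n (fun i => P (p.succAbove i)) x y z := by
    rw [G, Finset.mul_sum]
    apply Finset.sum_congr rfl
    intro τ _
    rw [lenB_ins, negF_ins, cinvF_ins, cnspF_ins]
    simp only [if_false, Bool.false_eq_true]
    rw [pow_add, pow_add]
    ring
  rw [hT, hF]
  ring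


def Alt {N : ℕ} (P : Fin N → Bool) : Prop :=
  ∀ i j : Fin N, (j : ℕ) = (i : ℕ) + 1 → P i ≠ P j

instance {N : ℕ} (P : Fin N → Bool) : Decidable (Alt P) := by
  unfold Alt; infer_instance

def clo (N : ℕ) (b : Bool) (x y z : R) : R :=
  if b then
    (if N % 2 = 0 then 1 - (y*z) ^ (N/2) else 1) *
      ((1 - x) * ∏ i ∈ Icc 1 ((N-1)/2), ((1 - x * z ^ (2*i)) * (1 - y ^ (2*i))))
  else
    if N % 2 = 0 then
      (1 - x) * (z ^ (N/2) - y ^ (N/2)) *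
        ∏ i ∈ Icc 1 ((N-1)/2), ((1 - x * z ^ (2*i)) * (1 - y ^ (2*i)))
    else 0

lemma G_zero (P : Fin 0 → Bool) (x y z : R) : G 0 P x y z = 1 := by
  rw [G]
  have h1 : ∀ σ : BG 0,
      (-1:R) ^ lenB σ * x ^ negF σ P * y ^ cinvF σ P * z ^ cnspF σ P = 1 := by
    intro σ
    simp [lenB, invB, nnegB, nspB, negF, cinvF, cnspF, pairsF]
  rw [Finset.sum_congr rfl (fun σ _ => h1 σ)]
  simp [Fintype.card_perm]

lemma bool_ne_iff {a b : Bool} (h : a ≠ b) : b = !a := by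
  revert h; revert a b; decide

lemma bool_eq_of_ne_ne {a b c : Bool} (h1 : a ≠ c) (h2 : b ≠ c) : a = b := by
  revert h1 h2; revert a b c; decide

lemma altVal {N : ℕ} {P : Fin (N+1) → Bool} (hA : Alt P) (j : Fin (N+1)) :
    P j = if (j : ℕ) % 2 = 1 then !(P 0) else P 0 := by
  have key : ∀ v : ℕ, ∀ h : v < N + 1, P ⟨v, h⟩ = if v % 2 = 1 then !(P 0) else P 0 := by
    intro v
    induction v with
    | zero =>
      intro h
      simp only [Nat.zero_mod, if_neg (by omega : ¬ (0 % 2 = 1))]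
      rfl
    | succ v ih =>
      intro h
      have hv : v < N + 1 := by omega
      have hadj := hA ⟨v, hv⟩ ⟨v+1, h⟩ rfl
      rw [bool_ne_iff hadj, ih hv]
      by_cases h2 : v % 2 = 1
      · rw [if_pos h2, if_neg (by omega)]
        simp
      · rw [if_neg h2, if_pos (by omega)]
  rcases j with ⟨v, hvlt⟩
  exact key v hvlt

lemma alt_comp_zero {N : ℕ} {P : Fin (N+1) → Bool} (hA : Alt P) :
    Alt (fun i : Fin N => P ((0 : Fin (N+1)).succAbove i)) := by
  intro i j hij
  simp only [Fin.succAbove_zero]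
  exact hA i.succ j.succ (by simp [Fin.val_succ]; omega)

lemma alt_comp_last {N : ℕ} {P : Fin (N+1) → Bool} (hA : Alt P) :
    Alt (fun i : Fin N => P ((Fin.last N).succAbove i)) := by
  intro i j hij
  simp only [Fin.succAbove_last]
  exact hA i.castSucc j.castSucc (by simpa using hij)

lemma not_alt_comp_of_defect {N : ℕ} {P : Fin (N+1) → Bool} {a : ℕ}
    (ha : a + 1 < N + 1) (hd : P ⟨a, by omega⟩ = P ⟨a+1, ha⟩)
    (p : Fin (N+1)) (hp0 : p.val ≠ a) (hp1 : p.val ≠ a + 1) :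
    ¬ Alt (fun i : Fin N => P (p.succAbove i)) := by
  intro hB
  have hpl := p.isLt
  by_cases hlt : p.val < a
  · have h1 : a - 1 < N := by omega
    have h2 : a < N := by omega
    have e1 : p.succAbove ⟨a-1, h1⟩ = ⟨a, by omega⟩ := by
      rw [Fin.succAbove_of_le_castSucc]
      · ext; simp [Fin.val_succ]; omega
      · rw [Fin.le_def]; simp; omega
    have e2 : p.succAbove ⟨a, h2⟩ = ⟨a+1, ha⟩ := by
      rw [Fin.succAbove_of_le_castSucc]
      · ext; simp [Fin.val_succ]
      · rw [Fin.le_def]; simp; omega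
    have := hB ⟨a-1, h1⟩ ⟨a, h2⟩ (by simp; omega)
    simp only [e1, e2] at this
    exact this hd
  · have hgt : a + 1 < p.val := by omega
    have h1 : a < N := by omega
    have h2 : a + 1 < N := by omega
    have e1 : p.succAbove ⟨a, h1⟩ = ⟨a, by omega⟩ := by
      rw [Fin.succAbove_of_castSucc_lt]
      · rfl
      · rw [Fin.lt_def]; simp; omega
    have e2 : p.succAbove ⟨a+1, h2⟩ = ⟨a+1, ha⟩ := by
      rw [Fin.succAbove_of_castSucc_lt]
      · rfl
      · rw [Fin.lt_def]; simp; omega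
    have := hB ⟨a, h1⟩ ⟨a+1, h2⟩ (by simp)
    simp only [e1, e2] at this
    exact this hd

lemma not_alt_comp_middle {N : ℕ} {P : Fin (N+1) → Bool} {a : ℕ}
    (ha : a + 2 < N + 1) (hd1 : P ⟨a, by omega⟩ = P ⟨a+1, by omega⟩)
    (hd2 : P ⟨a+1, by omega⟩ = P ⟨a+2, by omega⟩)
    (p : Fin (N+1)) (hp : p.val = a + 1) :
    ¬ Alt (fun i : Fin N => P (p.succAbove i)) := by
  intro hB
  have h1 : a < N := by omega
  have h2 : a + 1 < N := by omega
  have e1 : p.succAbove ⟨a, h1⟩ = ⟨a, by omega⟩ := by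
    rw [Fin.succAbove_of_castSucc_lt]
    · rfl
    · rw [Fin.lt_def]; simp; omega
  have e2 : p.succAbove ⟨a+1, h2⟩ = ⟨a+2, by omega⟩ := by
    rw [Fin.succAbove_of_le_castSucc]
    · ext; simp [Fin.val_succ]
    · rw [Fin.le_def]; simp; omega
  have := hB ⟨a, h1⟩ ⟨a+1, h2⟩ (by simp)
  simp only [e1, e2] at this
  exact this (hd1.trans hd2)

lemma not_alt_comp_interior {N : ℕ} {P : Fin (N+1) → Bool} (hA : Alt P) (p : Fin (N+1))
    (h0 : p.val ≠ 0) (hl : p.val ≠ N) : ¬ Alt (fun i : Fin N => P (p.succAbove i)) := by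
  have hpl := p.isLt
  have hd1 := hA ⟨p.val - 1, by omega⟩ ⟨p.val, by omega⟩ (by simp; omega)
  have hd2 := hA ⟨p.val, by omega⟩ ⟨p.val + 1, by omega⟩ (by simp)
  have hd : P ⟨p.val - 1, by omega⟩ = P ⟨p.val + 1, by omega⟩ :=
    bool_eq_of_ne_ne hd1 (Ne.symm hd2)
  intro hB
  have h1 : p.val - 1 < N := by omega
  have h2 : p.val < N := by omega
  have e1 : p.succAbove ⟨p.val - 1, h1⟩ = ⟨p.val - 1, by omega⟩ := by
    rw [Fin.succAbove_of_castSucc_lt]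
    · rfl
    · rw [Fin.lt_def]; show p.val - 1 < p.val; omega
  have e2 : p.succAbove ⟨p.val, h2⟩ = ⟨p.val + 1, by omega⟩ := by
    rw [Fin.succAbove_of_le_castSucc]
    · ext; simp [Fin.val_succ]
    · rw [Fin.le_def]; simp
  have := hB ⟨p.val - 1, h1⟩ ⟨p.val, h2⟩ (by simp; omega)
  simp only [e1, e2] at this
  exact this hd

lemma range_mod2 (m r : ℕ) (hr : r < 2) :
    ((range m).filter fun i => i % 2 = r).card = (m + 1 - r) / 2 := by
  induction m with
  | zero => rcases (by omega : r = 0 ∨ r = 1) with h | h <;> simp [h]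
  | succ m ih =>
    rw [range_add_one, filter_insert]
    by_cases h : m % 2 = r
    · rw [if_pos h, card_insert_of_notMem (by simp)]
      omega
    · rw [if_neg h]
      omega

lemma card_mod2 (m r : ℕ) (hr : r < 2) :
    (univ.filter fun i : Fin m => (i:ℕ) % 2 = r).card = (m + 1 - r) / 2 := by
  rw [card_filter, Fin.sum_univ_eq_sum_range (fun i => if i % 2 = r then 1 else 0) m,
    ← card_filter, range_mod2 m r hr]

lemma ddF_zero {N : ℕ} (P : Fin (N+1) → Bool) : ddF 0 P = 0 := by
  rw [ddF, card_eq_zero, filter_eq_empty_iff]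
  intro j _
  rintro ⟨hc, -⟩
  exact (Fin.not_lt_zero _) hc

lemma ccF_last {N : ℕ} (P : Fin (N+1) → Bool) : ccF (Fin.last N) P = 0 := by
  rw [ccF, card_eq_zero, filter_eq_empty_iff]
  intro j _
  rintro ⟨hc, -⟩
  rw [Fin.succAbove_last] at hc
  exact absurd (j.castSucc_lt_last) (lt_asymm hc)

lemma ccF_zero_alt {N : ℕ} {P : Fin (N+1) → Bool} (hA : Alt P) : ccF 0 P = (N+1)/2 := by
  rw [ccF]
  have hcond : ∀ j : Fin N,
      ((0 : Fin (N+1)) < (0 : Fin (N+1)).succAbove j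
        ∧ P ((0 : Fin (N+1)).succAbove j) ≠ P 0) ↔ (j:ℕ) % 2 = 0 := by
    intro j
    have hv := altVal hA ((0 : Fin (N+1)).succAbove j)
    have hval : (((0 : Fin (N+1)).succAbove j : Fin (N+1)) : ℕ) = (j:ℕ) + 1 := by
      simp [Fin.succAbove_zero]
    have hpos : (0 : Fin (N+1)) < (0 : Fin (N+1)).succAbove j := by
      rw [Fin.lt_def, hval]; simp
    rw [hv, hval]
    constructor
    · rintro ⟨-, hne⟩
      by_contra hj
      rw [if_neg (by omega)] at hne
      exact hne rfl
    · intro hj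
      refine ⟨hpos, ?_⟩
      rw [if_pos (by omega)]
      simp
  rw [filter_congr (fun j _ => hcond j), card_mod2 N 0 (by omega)]
  omega

lemma ddF_last_alt {N : ℕ} {P : Fin (N+1) → Bool} (hA : Alt P) :
    ddF (Fin.last N) P = (N+1)/2 := by
  rw [ddF]
  have hcond : ∀ j : Fin N,
      ((Fin.last N).succAbove j < Fin.last N
        ∧ P ((Fin.last N).succAbove j) ≠ P (Fin.last N)) ↔ ¬ ((j:ℕ) % 2 = N % 2) := by
    intro j
    have hv := altVal hA ((Fin.last N).succAbove j)
    have hl := altVal hA (Fin.last N)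
    have hval : (((Fin.last N).succAbove j : Fin (N+1)) : ℕ) = (j:ℕ) := by
      simp [Fin.succAbove_last]
    have hlt : (Fin.last N).succAbove j < Fin.last N := by
      rw [Fin.succAbove_last]; exact j.castSucc_lt_last
    rw [hv, hl, hval, Fin.val_last]
    constructor
    · rintro ⟨-, hne⟩
      intro hj
      apply hne
      by_cases h1 : (j:ℕ) % 2 = 1
      · rw [if_pos h1, if_pos (by omega)]
      · rw [if_neg h1, if_neg (by omega)]
    · intro hj
      refine ⟨hlt, ?_⟩
      by_cases h1 : (j:ℕ) % 2 = 1
      · rw [if_pos h1, if_neg (by omega)]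
        simp
      · rw [if_neg h1, if_pos (by omega)]
        intro hcc
        exact absurd hcc.symm (by simp)
  rw [filter_congr (fun j _ => hcond j)]
  by_cases hN : N % 2 = 0
  · have : ∀ j : Fin N, (¬ ((j:ℕ) % 2 = N % 2)) ↔ (j:ℕ) % 2 = 1 := by
      intro j; omega
    rw [filter_congr (fun j _ => this j), card_mod2 N 1 (by omega)]
    omega
  · have : ∀ j : Fin N, (¬ ((j:ℕ) % 2 = N % 2)) ↔ (j:ℕ) % 2 = 0 := by
      intro j; omega
    rw [filter_congr (fun j _ => this j), card_mod2 N 0 (by omega)]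
    omega

lemma ccF_big {N : ℕ} (p : Fin (N+1)) (P : Fin (N+1) → Bool) :
    ccF p P = (univ.filter fun q : Fin (N+1) => p < q ∧ P q ≠ P p).card := by
  rw [ccF, card_filter, card_filter,
    Fin.sum_univ_succAbove (fun q => if (p < q ∧ P q ≠ P p) then 1 else 0) p]
  simp [lt_irrefl]

lemma ddF_big {N : ℕ} (p : Fin (N+1)) (P : Fin (N+1) → Bool) :
    ddF p P = (univ.filter fun q : Fin (N+1) => q < p ∧ P q ≠ P p).card := by
  rw [ddF, card_filter, card_filter,
    Fin.sum_univ_succAbove (fun q => if (q < p ∧ P q ≠ P p) then 1 else 0) p]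
  simp [lt_irrefl]

lemma clo_odd_true (N k : ℕ) (hN : N = 2*k+1) (x y z : R) :
    clo N true x y z
      = (1-x) * ∏ i ∈ Icc 1 k, ((1 - x * z ^ (2*i)) * (1 - y ^ (2*i))) := by
  subst hN
  rw [clo, if_pos rfl, if_neg (by omega), show (2*k+1-1)/2 = k by omega, one_mul]

lemma clo_odd_false (N k : ℕ) (hN : N = 2*k+1) (x y z : R) : clo N false x y z = 0 := by
  subst hN
  rw [clo]
  simp only [Bool.false_eq_true, if_false]
  rw [if_neg (by omega)]

lemma clo_even_true (N k : ℕ) (hN : N = 2*k+2) (x y z : R) :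
    clo N true x y z
      = (1 - (y*z)^(k+1)) * ((1-x) * ∏ i ∈ Icc 1 k, ((1 - x * z ^ (2*i)) * (1 - y ^ (2*i)))) := by
  subst hN
  rw [clo, if_pos rfl, if_pos (by omega), show (2*k+2)/2 = k+1 by omega,
    show (2*k+2-1)/2 = k by omega]

lemma clo_even_false (N k : ℕ) (hN : N = 2*k+2) (x y z : R) :
    clo N false x y z
      = (1-x) * (z^(k+1) - y^(k+1)) * ∏ i ∈ Icc 1 k, ((1 - x * z ^ (2*i)) * (1 - y ^ (2*i))) := by
  subst hN
  rw [clo]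
  simp only [Bool.false_eq_true, if_false]
  rw [if_pos (by omega), show (2*k+2)/2 = k+1 by omega, show (2*k+2-1)/2 = k by omega]

lemma G_main (x y z : R) : ∀ n : ℕ, ∀ P : Fin (n+1) → Bool,
    G (n+1) P x y z = if Alt P then clo (n+1) (P 0) x y z else 0 := by
  intro n
  induction n with
  | zero =>
    intro P
    have hAlt : Alt P := by
      intro i j hij
      have h1 := j.isLt
      have h2 := i.isLt
      omega
    rw [G_succ, Fin.sum_univ_one, if_pos hAlt, G_zero]
    have hc : ccF (0 : Fin 1) P = 0 := by
      rw [ccF]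
      simp
    have hd : ddF (0 : Fin 1) P = 0 := by
      rw [ddF]
      simp
    rw [hc, hd]
    have hIcc : (Icc 1 0 : Finset ℕ) = ∅ := Finset.Icc_eq_empty (by omega)
    cases hP : P 0 <;> simp [clo, hP, hIcc] <;> ring
  | succ n ih =>
    intro P
    rw [G_succ]
    by_cases hA : Alt P
    · rw [if_pos hA]
      have h0l : (0 : Fin (n+2)) ≠ Fin.last (n+1) := by
        intro h
        have := congrArg Fin.val h
        simp at this
      rw [← Finset.sum_subset (subset_univ ({0, Fin.last (n+1)} : Finset (Fin (n+2))))
        (fun p _ hp => by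
          simp only [mem_insert, mem_singleton] at hp
          push_neg at hp
          rw [ih, if_neg (not_alt_comp_interior hA p
            (fun h => hp.1 (Fin.ext h)) (fun h => hp.2 (Fin.ext h))), mul_zero])]
      rw [Finset.sum_pair h0l]
      simp only [ih]
      rw [if_pos (alt_comp_zero hA), if_pos (alt_comp_last hA)]
      rw [ccF_zero_alt hA, ddF_zero, ccF_last, ddF_last_alt hA]
      have hP1 : P 1 = !(P 0) := bool_ne_iff (hA 0 1 (by simp))
      have hPl := altVal hA (Fin.last (n+1))
      simp only [Fin.val_zero, Fin.val_last, Fin.succAbove_zero, Fin.succ_zero_eq_one,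
        Fin.castSucc_zero, hP1, hPl, Nat.sub_zero, Nat.sub_self, pow_zero, Nat.add_zero,
        Nat.zero_add, add_zero, zero_add, one_mul, mul_one, Fin.succAbove_last]
      have hs3 : ((-1 : R)) ^ (n + 1 + (n + 1) + 1) = -1 := Odd.neg_one_pow ⟨n+1, by ring⟩
      rw [hs3]
      rcases Nat.even_or_odd n with ⟨m, hm⟩ | ⟨m, hm⟩
      · -- n even, n = m + m
        subst hm
        have hs1 : ((-1 : R)) ^ (m + m + 1) = -1 := Odd.neg_one_pow ⟨m, by ring⟩
        have hs2 : ((-1 : R)) ^ (m + m + 1 + 1) = 1 := Even.neg_one_pow ⟨m+1, by ring⟩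
        rw [hs1, hs2, show (m + m + 1 + 1)/2 = m + 1 by omega]
        rw [if_pos (by omega : (m+m+1) % 2 = 1)]
        cases hb : P 0 with
        | false =>
          simp only [hb, Bool.not_false, Bool.false_eq_true, if_false, eq_self_iff_true,
            if_true]
          rw [clo_odd_true (m+m+1) m (by ring), clo_odd_false (m+m+1) m (by ring),
            clo_even_false (m+m+1+1) m (by ring)]
          ring
        | true =>
          simp only [hb, Bool.not_true, Bool.false_eq_true, if_false, eq_self_iff_true,
            if_true]
          rw [clo_odd_true (m+m+1) m (by ring), clo_odd_false (m+m+1) m (by ring),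
            clo_even_true (m+m+1+1) m (by ring)]
          ring
      · -- n odd, n = 2m+1
        subst hm
        have hs1 : ((-1 : R)) ^ (2*m + 1 + 1) = 1 := Even.neg_one_pow ⟨m+1, by ring⟩
        have hs2 : ((-1 : R)) ^ (2*m + 1 + 1 + 1) = -1 := Odd.neg_one_pow ⟨m+1, by ring⟩
        rw [hs1, hs2, show (2*m + 1 + 1 + 1)/2 = m + 1 by omega]
        rw [if_neg (by omega : ¬ ((2*m+1+1) % 2 = 1))]
        cases hb : P 0 with
        | false =>
          simp only [hb, Bool.not_false, Bool.false_eq_true, if_false, eq_self_iff_true,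
            if_true]
          rw [clo_even_true (2*m+1+1) m (by ring), clo_even_false (2*m+1+1) m (by ring),
            clo_odd_false (2*m+1+1+1) (m+1) (by ring)]
          ring
        | true =>
          simp only [hb, Bool.not_true, Bool.false_eq_true, if_false, eq_self_iff_true,
            if_true]
          rw [clo_even_true (2*m+1+1) m (by ring), clo_even_false (2*m+1+1) m (by ring),
            clo_odd_true (2*m+1+1+1) (m+1) (by ring),
            Finset.prod_Icc_succ_top (by omega : 1 ≤ m + 1)]
          ring
    · rw [if_neg hA]
      have hdef : ∃ a : ℕ, ∃ h : a + 1 < n + 2, P ⟨a, by omega⟩ = P ⟨a+1, h⟩ := by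
        by_contra hno
        push_neg at hno
        apply hA
        rintro ⟨iv, hiv⟩ ⟨jv, hjv⟩ hij
        simp only [Fin.val_mk] at hij
        subst hij
        exact hno iv hjv
      obtain ⟨a, ha, hda⟩ := hdef
      by_cases htwo : ∃ b : ℕ, ∃ h : b + 1 < n + 2, b ≠ a ∧ P ⟨b, by omega⟩ = P ⟨b+1, h⟩
      · apply Finset.sum_eq_zero
        intro p _
        obtain ⟨b, hb, hba, hdb⟩ := htwo
        have hnot : ¬ Alt (fun i : Fin (n+1) => P (p.succAbove i)) := by
          by_cases hpa : p.val ≠ a ∧ p.val ≠ a + 1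
          · exact not_alt_comp_of_defect ha hda p hpa.1 hpa.2
          · by_cases hpb : p.val ≠ b ∧ p.val ≠ b + 1
            · exact not_alt_comp_of_defect hb hdb p hpb.1 hpb.2
            · have hpa' : p.val = a ∨ p.val = a + 1 := by
                by_contra hc
                push_neg at hc
                exact hpa ⟨hc.1, hc.2⟩
              have hpb' : p.val = b ∨ p.val = b + 1 := by
                by_contra hc
                push_neg at hc
                exact hpb ⟨hc.1, hc.2⟩
              have hcase : (b = a + 1 ∧ p.val = a + 1) ∨ (a = b + 1 ∧ p.val = b + 1) := by
                omega
              rcases hcase with ⟨hba', hp⟩ | ⟨hab', hp⟩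
              · subst hba'
                exact not_alt_comp_middle (by omega) hda hdb p hp
              · subst hab'
                exact not_alt_comp_middle (by omega) hdb hda p hp
        rw [ih, if_neg hnot, mul_zero]
      · push_neg at htwo
        have hb' : ∀ (b : ℕ) (h : b + 1 < n + 2), b ≠ a → P ⟨b, by omega⟩ ≠ P ⟨b+1, h⟩ :=
          fun b h hba => htwo b h hba
        rw [← Finset.sum_subset
          (subset_univ ({⟨a, by omega⟩, ⟨a+1, ha⟩} : Finset (Fin (n+2))))
          (fun p _ hp => by
            simp only [mem_insert, mem_singleton] at hp
            push_neg at hp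
            have hv1 : p.val ≠ a := fun h => hp.1 (Fin.ext h)
            have hv2 : p.val ≠ a + 1 := fun h => hp.2 (Fin.ext h)
            rw [ih, if_neg (not_alt_comp_of_defect ha hda p hv1 hv2), mul_zero])]
        rw [Finset.sum_pair (by
          intro h
          have := congrArg Fin.val h
          simp only [Fin.val_mk] at this
          omega)]
        have hcomp : (fun i : Fin (n+1) => P ((⟨a, by omega⟩ : Fin (n+2)).succAbove i))
            = (fun i : Fin (n+1) => P ((⟨a+1, ha⟩ : Fin (n+2)).succAbove i)) := by
          funext i
          rcases lt_trichotomy i.val a with h | h | h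
          · rw [Fin.succAbove_of_castSucc_lt _ _ (by rw [Fin.lt_def]; simpa),
              Fin.succAbove_of_castSucc_lt _ _ (by rw [Fin.lt_def]; simp; omega)]
          · rw [Fin.succAbove_of_le_castSucc _ _ (by rw [Fin.le_def]; simp; omega),
              Fin.succAbove_of_castSucc_lt _ _ (by rw [Fin.lt_def]; simp; omega)]
            have e1 : i.succ = (⟨a+1, ha⟩ : Fin (n+2)) := Fin.ext (by simp [Fin.val_succ, h])
            have e2 : i.castSucc = (⟨a, by omega⟩ : Fin (n+2)) := Fin.ext (by simp [h])
            rw [e1, e2, hda]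
          · rw [Fin.succAbove_of_le_castSucc _ _ (by rw [Fin.le_def]; simp; omega),
              Fin.succAbove_of_le_castSucc _ _ (by rw [Fin.le_def]; simp; omega)]
        have hcc : ccF (⟨a, by omega⟩ : Fin (n+2)) P = ccF (⟨a+1, ha⟩ : Fin (n+2)) P := by
          rw [ccF_big, ccF_big]
          congr 1
          apply filter_congr
          intro q _
          rw [Fin.lt_def, Fin.lt_def]
          simp only [Fin.val_mk]
          constructor
          · rintro ⟨h1, h2⟩
            have hq : q.val ≠ a + 1 := by
              intro hqe
              exact h2 (by rw [show q = (⟨a+1, ha⟩ : Fin (n+2)) from Fin.ext hqe, ← hda])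
            exact ⟨by omega, by rw [← hda]; exact h2⟩
          · rintro ⟨h1, h2⟩
            exact ⟨by omega, by rw [hda]; exact h2⟩
        have hdd : ddF (⟨a, by omega⟩ : Fin (n+2)) P = ddF (⟨a+1, ha⟩ : Fin (n+2)) P := by
          rw [ddF_big, ddF_big]
          congr 1
          apply filter_congr
          intro q _
          rw [Fin.lt_def, Fin.lt_def]
          simp only [Fin.val_mk]
          constructor
          · rintro ⟨h1, h2⟩
            exact ⟨by omega, by rw [← hda]; exact h2⟩
          · rintro ⟨h1, h2⟩
            have hq : q.val ≠ a := by
              intro hqe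
              exact h2 (by rw [show q = (⟨a, by omega⟩ : Fin (n+2)) from Fin.ext hqe, hda])
            exact ⟨by omega, by rw [hda]; exact h2⟩
        have hval : P (⟨a, by omega⟩ : Fin (n+2)) = P (⟨a+1, ha⟩ : Fin (n+2)) := hda
        rw [hcomp, hcc, hdd, hval]
        simp only [Fin.val_mk]
        rw [show n + 1 - a = ((n + 1) - (a+1)) + 1 by omega, pow_succ,
          show a + 1 + (n + 1) + 1 = (a + (n + 1) + 1) + 1 by omega, pow_succ]
        ring

end Aux

/-- the signed generating function of `(eneg, oinv, onsp)` over `B_n` -/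
theorem signed_multivariate_eoo (n : ℕ) (hn : 0 < n)
    (R : Type*) [CommRing R] (x y z : R) :
    ∑ σ : BG n, (-1 : R) ^ lenB σ * x ^ enegB σ * y ^ oinvB σ * z ^ onspB σ =
      if n % 2 = 0 then
        (1 - x) * (z ^ (n / 2) - y ^ (n / 2)) *
          ∏ i ∈ Icc 1 ((n - 1) / 2), ((1 - x * z ^ (2 * i)) * (1 - y ^ (2 * i)))
      else
        0 := by
  obtain ⟨k, rfl⟩ : ∃ k, n = k + 1 := ⟨n - 1, by omega⟩
  set P₀ : Fin (k+1) → Bool := fun i => decide ((i.val + 1) % 2 = 0) with hP₀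
  have hsum : (∑ σ : BG (k+1), (-1:R) ^ lenB σ * x ^ enegB σ * y ^ oinvB σ * z ^ onspB σ)
      = G (k+1) P₀ x y z := by
    rw [G]
    apply Finset.sum_congr rfl
    intro σ _
    have h1 : enegB σ = negF σ P₀ := by
      rw [enegB, negF]
      congr 1
      apply filter_congr
      intro i _
      simp [P₀]
    have h2 : oinvB σ = cinvF σ P₀ := by
      rw [oinvB, cinvF, pairsF, filter_filter, filter_filter]
      congr 1
      apply filter_congr
      intro q _
      constructor
      · rintro ⟨hlt, hw, hpar⟩
        refine ⟨hlt, hw, ?_⟩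
        have hv : q.1.val < q.2.val := hlt
        simp only [P₀, ne_eq, decide_eq_decide]
        omega
      · rintro ⟨hlt, hw, hpar⟩
        refine ⟨hlt, hw, ?_⟩
        have hv : q.1.val < q.2.val := hlt
        simp only [P₀, ne_eq, decide_eq_decide] at hpar
        omega
    have h3 : onspB σ = cnspF σ P₀ := by
      rw [onspB, cnspF, pairsF, filter_filter, filter_filter]
      congr 1
      apply filter_congr
      intro q _
      constructor
      · rintro ⟨hlt, hw, hpar⟩
        refine ⟨hlt, hw, ?_⟩
        have hv : q.1.val < q.2.val := hlt
        simp only [P₀, ne_eq, decide_eq_decide]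
        omega
      · rintro ⟨hlt, hw, hpar⟩
        refine ⟨hlt, hw, ?_⟩
        have hv : q.1.val < q.2.val := hlt
        simp only [P₀, ne_eq, decide_eq_decide] at hpar
        omega
    rw [h1, h2, h3]
  rw [hsum, G_main x y z k P₀]
  have hAlt : Alt P₀ := by
    intro i j hij
    simp only [P₀, ne_eq, decide_eq_decide]
    omega
  rw [if_pos hAlt]
  have hP0 : P₀ 0 = false := by simp [P₀]
  rw [hP0, clo]
  simp only [Bool.false_eq_true, if_false]
end

section
/- For every positive integer n, ∑_{σ ∈ D_n} (−1)^{ℓ_D(σ)} x^{oinv(σ)} y^{ensp(σ)} = 0. -/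
open Finset

namespace DP
variable {n : ℕ}

def zz (hn : 2 ≤ n) : Fin n := ⟨0, by omega⟩
def oo (hn : 2 ≤ n) : Fin n := ⟨1, by omega⟩

def pP (hn : 2 ≤ n) (σ : BG n) : Fin n := σ.1⁻¹ (zz hn)
def qP (hn : 2 ≤ n) (σ : BG n) : Fin n := σ.1⁻¹ (oo hn)

def cond (hn : 2 ≤ n) (σ : BG n) : Bool :=
  (σ.2 (pP hn σ) == σ.2 (qP hn σ)) == (((pP hn σ).val + (qP hn σ).val) % 2 == 0)

def invol (hn : 2 ≤ n) (σ : BG n) : BG n :=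
  (Equiv.swap (zz hn) (oo hn) * σ.1,
   fun i => if cond hn σ then σ.2 i
            else if i = pP hn σ ∨ i = qP hn σ then !σ.2 i else σ.2 i)

lemma zz_ne_oo (hn : 2 ≤ n) : zz hn ≠ oo hn := by
  simp [zz, oo, Fin.ext_iff]

lemma pP_ne_qP (hn : 2 ≤ n) (σ : BG n) : pP hn σ ≠ qP hn σ :=
  fun h => zz_ne_oo hn ((Equiv.injective _) h)

lemma apply_pP (hn : 2 ≤ n) (σ : BG n) : σ.1 (pP hn σ) = zz hn :=
  Equiv.apply_symm_apply _ _

lemma apply_qP (hn : 2 ≤ n) (σ : BG n) : σ.1 (qP hn σ) = oo hn :=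
  Equiv.apply_symm_apply _ _

lemma invol_fst_pP (hn : 2 ≤ n) (σ : BG n) :
    (invol hn σ).1 (pP hn σ) = oo hn := by
  simp [invol, Equiv.Perm.mul_apply, apply_pP, Equiv.swap_apply_left]

lemma invol_fst_qP (hn : 2 ≤ n) (σ : BG n) :
    (invol hn σ).1 (qP hn σ) = zz hn := by
  simp [invol, Equiv.Perm.mul_apply, apply_qP, Equiv.swap_apply_right]

lemma apply_ne_of_ne (hn : 2 ≤ n) (σ : BG n) {i : Fin n}
    (hi : i ≠ pP hn σ) (hj : i ≠ qP hn σ) :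
    σ.1 i ≠ zz hn ∧ σ.1 i ≠ oo hn := by
  constructor
  · intro h; exact hi (by rw [pP, ← h, Equiv.Perm.inv_def, Equiv.symm_apply_apply])
  · intro h; exact hj (by rw [qP, ← h, Equiv.Perm.inv_def, Equiv.symm_apply_apply])

lemma invol_snd_pP (hn : 2 ≤ n) (σ : BG n) :
    (invol hn σ).2 (pP hn σ) = if cond hn σ then σ.2 (pP hn σ) else !σ.2 (pP hn σ) := by
  simp [invol]

lemma invol_snd_qP (hn : 2 ≤ n) (σ : BG n) :
    (invol hn σ).2 (qP hn σ) = if cond hn σ then σ.2 (qP hn σ) else !σ.2 (qP hn σ) := by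
  simp [invol]

lemma wval_eq_of_ne (hn : 2 ≤ n) (σ : BG n) {i : Fin n}
    (hi : i ≠ pP hn σ) (hj : i ≠ qP hn σ) :
    wval (invol hn σ) i = wval σ i := by
  obtain ⟨h1, h2⟩ := apply_ne_of_ne hn σ hi hj
  simp [invol, wval, Equiv.Perm.mul_apply, Equiv.swap_apply_of_ne_of_ne h1 h2, hi, hj]

lemma wval_big (hn : 2 ≤ n) (σ : BG n) {i : Fin n}
    (hi : i ≠ pP hn σ) (hj : i ≠ qP hn σ) :
    wval σ i ≤ -3 ∨ 3 ≤ wval σ i := by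
  obtain ⟨h1, h2⟩ := apply_ne_of_ne hn σ hi hj
  have hv1 : (σ.1 i).val ≠ 0 := fun h => h1 (by simp [zz, Fin.ext_iff, h])
  have hv2 : (σ.1 i).val ≠ 1 := fun h => h2 (by simp [oo, Fin.ext_iff, h])
  have : (2 : ℤ) ≤ ((σ.1 i).val : ℤ) := by omega
  have hc : (σ.1 i : ℤ) = ((σ.1 i).val : ℤ) := rfl
  unfold wval
  rw [hc]
  cases hb : σ.2 i <;> simp <;> omega

lemma wval_sigma_pP (hn : 2 ≤ n) (σ : BG n) :
    wval σ (pP hn σ) = (if σ.2 (pP hn σ) then -1 else 1) := by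
  have : ((σ.1 (pP hn σ) : ℤ)) = 0 := by rw [apply_pP]; rfl
  simp [wval, this]

lemma wval_sigma_qP (hn : 2 ≤ n) (σ : BG n) :
    wval σ (qP hn σ) = (if σ.2 (qP hn σ) then -1 else 1) * 2 := by
  have : ((σ.1 (qP hn σ) : ℤ)) = 1 := by rw [apply_qP]; rfl
  rw [wval, this]; norm_num

lemma wval_invol_pP (hn : 2 ≤ n) (σ : BG n) :
    wval (invol hn σ) (pP hn σ) =
      (if σ.2 (pP hn σ) then -1 else 1) * (if cond hn σ then 2 else -2) := by
  have h1 : (((invol hn σ).1 (pP hn σ) : ℤ)) = 1 := by rw [invol_fst_pP]; rfl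
  rw [wval, h1, invol_snd_pP]
  cases hc : cond hn σ <;> cases hs : σ.2 (pP hn σ) <;> norm_num

lemma wval_invol_qP (hn : 2 ≤ n) (σ : BG n) :
    wval (invol hn σ) (qP hn σ) =
      (if σ.2 (qP hn σ) then -1 else 1) * (if cond hn σ then 1 else -1) := by
  have h1 : (((invol hn σ).1 (qP hn σ) : ℤ)) = 0 := by rw [invol_fst_qP]; rfl
  rw [wval, h1, invol_snd_qP]
  cases hc : cond hn σ <;> cases hs : σ.2 (qP hn σ) <;> norm_num


lemma wval_small (hn : 2 ≤ n) (σ : BG n) :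
    (-2 ≤ wval σ (pP hn σ) ∧ wval σ (pP hn σ) ≤ 2) ∧
    (-2 ≤ wval σ (qP hn σ) ∧ wval σ (qP hn σ) ≤ 2) ∧
    (-2 ≤ wval (invol hn σ) (pP hn σ) ∧ wval (invol hn σ) (pP hn σ) ≤ 2) ∧
    (-2 ≤ wval (invol hn σ) (qP hn σ) ∧ wval (invol hn σ) (qP hn σ) ≤ 2) := by
  rw [wval_sigma_pP, wval_sigma_qP, wval_invol_pP, wval_invol_qP]
  cases cond hn σ <;> cases σ.2 (pP hn σ) <;> cases σ.2 (qP hn σ) <;> norm_num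

/-- non-special pairs: both indicators preserved -/
lemma key_ns (hn : 2 ≤ n) (σ : BG n) (i j : Fin n) (hij : i ≠ j)
    (hs : ¬((i = pP hn σ ∧ j = qP hn σ) ∨ (i = qP hn σ ∧ j = pP hn σ))) :
    (wval (invol hn σ) j < wval (invol hn σ) i ↔ wval σ j < wval σ i) ∧
    (wval (invol hn σ) i + wval (invol hn σ) j < 0 ↔ wval σ i + wval σ j < 0) := by
  push_neg at hs
  obtain ⟨hs1, hs2⟩ := hs
  by_cases hip : i = pP hn σ ∨ i = qP hn σ
  · -- i special, j not special
    have hjp : j ≠ pP hn σ := by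
      rcases hip with rfl | rfl
      · intro h; exact hij h.symm
      · intro h; exact (hs2 rfl) h
    have hjq : j ≠ qP hn σ := by
      rcases hip with rfl | rfl
      · intro h; exact (hs1 rfl) h
      · intro h; exact hij h.symm
    have hw : wval (invol hn σ) j = wval σ j := wval_eq_of_ne hn σ hjp hjq
    have hbig := wval_big hn σ hjp hjq
    have hsm := wval_small hn σ
    rcases hip with rfl | rfl
    · rw [hw]
      constructor <;> constructor <;> intro h <;> rcases hbig with hb | hb <;> omega
    · rw [hw]
      constructor <;> constructor <;> intro h <;> rcases hbig with hb | hb <;> omega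
  · by_cases hjp : j = pP hn σ ∨ j = qP hn σ
    · push_neg at hip
      have hw : wval (invol hn σ) i = wval σ i := wval_eq_of_ne hn σ hip.1 hip.2
      have hbig := wval_big hn σ hip.1 hip.2
      have hsm := wval_small hn σ
      rcases hjp with rfl | rfl
      · rw [hw]
        constructor <;> constructor <;> intro h <;> rcases hbig with hb | hb <;> omega
      · rw [hw]
        constructor <;> constructor <;> intro h <;> rcases hbig with hb | hb <;> omega
    · push_neg at hip hjp
      rw [wval_eq_of_ne hn σ hip.1 hip.2, wval_eq_of_ne hn σ hjp.1 hjp.2]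
      exact ⟨Iff.rfl, Iff.rfl⟩

/-- special pair, odd distance: inversion indicator preserved -/
lemma key_s1 (hn : 2 ≤ n) (σ : BG n)
    (hpar : ((pP hn σ).val + (qP hn σ).val) % 2 = 1) (i j : Fin n)
    (hs : (i = pP hn σ ∧ j = qP hn σ) ∨ (i = qP hn σ ∧ j = pP hn σ)) :
    (wval (invol hn σ) j < wval (invol hn σ) i ↔ wval σ j < wval σ i) := by
  rcases hs with ⟨rfl, rfl⟩ | ⟨rfl, rfl⟩ <;>
    rw [wval_sigma_pP, wval_sigma_qP, wval_invol_pP, wval_invol_qP] <;>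
    cases hc : cond hn σ <;>
    cases hsp : σ.2 (pP hn σ) <;> cases hsq : σ.2 (qP hn σ) <;>
    simp_all [cond]

/-- special pair, even distance: nsp indicator preserved -/
lemma key_s2 (hn : 2 ≤ n) (σ : BG n)
    (hpar : ((pP hn σ).val + (qP hn σ).val) % 2 = 0) (i j : Fin n)
    (hs : (i = pP hn σ ∧ j = qP hn σ) ∨ (i = qP hn σ ∧ j = pP hn σ)) :
    (wval (invol hn σ) i + wval (invol hn σ) j < 0 ↔ wval σ i + wval σ j < 0) := by
  rcases hs with ⟨rfl, rfl⟩ | ⟨rfl, rfl⟩ <;>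
    rw [wval_sigma_pP, wval_sigma_qP, wval_invol_pP, wval_invol_qP] <;>
    cases hc : cond hn σ <;>
    cases hsp : σ.2 (pP hn σ) <;> cases hsq : σ.2 (qP hn σ) <;>
    simp_all [cond]

/-- special pair: exactly one of the two indicators flips -/
lemma key_s3 (hn : 2 ≤ n) (σ : BG n) (i j : Fin n)
    (hs : (i = pP hn σ ∧ j = qP hn σ) ∨ (i = qP hn σ ∧ j = pP hn σ)) :
    (((if wval (invol hn σ) j < wval (invol hn σ) i then 1 else 0) +
      (if wval (invol hn σ) i + wval (invol hn σ) j < 0 then 1 else 0)) +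
     ((if wval σ j < wval σ i then 1 else 0) +
      (if wval σ i + wval σ j < 0 then 1 else 0))) % 2 = 1 := by
  rcases hs with ⟨rfl, rfl⟩ | ⟨rfl, rfl⟩ <;>
    rw [wval_sigma_pP, wval_sigma_qP, wval_invol_pP, wval_invol_qP] <;>
    cases hc : cond hn σ <;>
    cases hsp : σ.2 (pP hn σ) <;> cases hsq : σ.2 (qP hn σ) <;>
    norm_num


lemma oinv_eq (hn : 2 ≤ n) (σ : BG n) : oinvB (invol hn σ) = oinvB σ := by
  unfold oinvB
  congr 1
  apply Finset.filter_congr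
  rintro ⟨i, j⟩ hij
  simp only [pairsF, mem_filter, mem_univ, true_and] at hij
  by_cases hs : ((i = pP hn σ ∧ j = qP hn σ) ∨ (i = qP hn σ ∧ j = pP hn σ))
  · by_cases hpar2 : (j.val - i.val) % 2 = 1
    · have hlt : i.val < j.val := hij
      have hparpq : ((pP hn σ).val + (qP hn σ).val) % 2 = 1 := by
        rcases hs with ⟨rfl, rfl⟩ | ⟨rfl, rfl⟩ <;> omega
      rw [key_s1 hn σ hparpq i j hs]
    · simp [hpar2]
  · rw [(key_ns hn σ i j (ne_of_lt hij) hs).1]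

lemma ensp_eq (hn : 2 ≤ n) (σ : BG n) : enspB (invol hn σ) = enspB σ := by
  unfold enspB
  congr 1
  apply Finset.filter_congr
  rintro ⟨i, j⟩ hij
  simp only [pairsF, mem_filter, mem_univ, true_and] at hij
  by_cases hs : ((i = pP hn σ ∧ j = qP hn σ) ∨ (i = qP hn σ ∧ j = pP hn σ))
  · by_cases hpar2 : (j.val - i.val) % 2 = 0
    · have hlt : i.val < j.val := hij
      have hparpq : ((pP hn σ).val + (qP hn σ).val) % 2 = 0 := by
        rcases hs with ⟨rfl, rfl⟩ | ⟨rfl, rfl⟩ <;> omega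
      rw [key_s2 hn σ hparpq i j hs]
    · simp [hpar2]
  · rw [(key_ns hn σ i j (ne_of_lt hij) hs).2]

lemma special_filter (hn : 2 ≤ n) (σ : BG n) :
    ((pairsF n).filter (fun r =>
      (r.1 = pP hn σ ∧ r.2 = qP hn σ) ∨ (r.1 = qP hn σ ∧ r.2 = pP hn σ))).card = 1 := by
  have hne := pP_ne_qP hn σ
  rcases lt_or_gt_of_ne hne with h | h
  · have : (pairsF n).filter (fun r =>
        (r.1 = pP hn σ ∧ r.2 = qP hn σ) ∨ (r.1 = qP hn σ ∧ r.2 = pP hn σ)) =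
        {(pP hn σ, qP hn σ)} := by
      ext ⟨i, j⟩
      simp only [pairsF, mem_filter, mem_univ, true_and, mem_singleton, Prod.mk.injEq,
        Fin.lt_def, Fin.ext_iff]
      have := h
      rw [Fin.lt_def] at this
      omega
    rw [this, card_singleton]
  · have : (pairsF n).filter (fun r =>
        (r.1 = pP hn σ ∧ r.2 = qP hn σ) ∨ (r.1 = qP hn σ ∧ r.2 = pP hn σ)) =
        {(qP hn σ, pP hn σ)} := by
      ext ⟨i, j⟩
      simp only [pairsF, mem_filter, mem_univ, true_and, mem_singleton, Prod.mk.injEq,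
        Fin.lt_def, Fin.ext_iff]
      have := h
      rw [Fin.lt_def] at this
      omega
    rw [this, card_singleton]

lemma lenD_parity (hn : 2 ≤ n) (σ : BG n) :
    (lenD (invol hn σ) + lenD σ) % 2 = 1 := by
  have hform : ∀ υ : BG n, lenD υ = ∑ r ∈ pairsF n,
      ((if wval υ r.2 < wval υ r.1 then 1 else 0) +
       (if wval υ r.1 + wval υ r.2 < 0 then 1 else 0)) := by
    intro υ
    unfold lenD invB nspB
    rw [Finset.sum_add_distrib, Finset.card_filter, Finset.card_filter]
  rw [hform, hform, ← Finset.sum_add_distrib, Finset.sum_nat_mod]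
  have hcong : ∀ r ∈ pairsF n,
      (((if wval (invol hn σ) r.2 < wval (invol hn σ) r.1 then 1 else 0) +
        (if wval (invol hn σ) r.1 + wval (invol hn σ) r.2 < 0 then 1 else 0)) +
       ((if wval σ r.2 < wval σ r.1 then 1 else 0) +
        (if wval σ r.1 + wval σ r.2 < 0 then 1 else 0))) % 2 =
      (if (r.1 = pP hn σ ∧ r.2 = qP hn σ) ∨ (r.1 = qP hn σ ∧ r.2 = pP hn σ)
        then 1 else 0) := by
    rintro ⟨i, j⟩ hij
    simp only [pairsF, mem_filter, mem_univ, true_and] at hij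
    by_cases hs : ((i = pP hn σ ∧ j = qP hn σ) ∨ (i = qP hn σ ∧ j = pP hn σ))
    · rw [if_pos hs]
      exact key_s3 hn σ i j hs
    · rw [if_neg hs]
      obtain ⟨h1, h2⟩ := key_ns hn σ i j (ne_of_lt hij) hs
      simp only [h1, h2]
      omega
  rw [Finset.sum_congr rfl hcong, ← Finset.card_filter, special_filter hn σ]

lemma invol_ne (hn : 2 ≤ n) (σ : BG n) : invol hn σ ≠ σ := by
  intro h
  have h1 : Equiv.swap (zz hn) (oo hn) * σ.1 = σ.1 := congrArg Prod.fst h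
  have h2 : Equiv.swap (zz hn) (oo hn) = 1 :=
    mul_right_cancel (h1.trans (one_mul σ.1).symm)
  have h3 : Equiv.swap (zz hn) (oo hn) (zz hn) = zz hn := by rw [h2]; rfl
  rw [Equiv.swap_apply_left] at h3
  exact zz_ne_oo hn h3.symm

lemma pP_invol (hn : 2 ≤ n) (σ : BG n) : pP hn (invol hn σ) = qP hn σ := by
  show (Equiv.swap (zz hn) (oo hn) * σ.1)⁻¹ (zz hn) = σ.1⁻¹ (oo hn)
  rw [mul_inv_rev, Equiv.swap_inv, Equiv.Perm.mul_apply, Equiv.swap_apply_left]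

lemma qP_invol (hn : 2 ≤ n) (σ : BG n) : qP hn (invol hn σ) = pP hn σ := by
  show (Equiv.swap (zz hn) (oo hn) * σ.1)⁻¹ (oo hn) = σ.1⁻¹ (zz hn)
  rw [mul_inv_rev, Equiv.swap_inv, Equiv.Perm.mul_apply, Equiv.swap_apply_right]

lemma cond_invol (hn : 2 ≤ n) (σ : BG n) : cond hn (invol hn σ) = cond hn σ := by
  unfold cond
  rw [pP_invol, qP_invol, invol_snd_pP, invol_snd_qP]
  cases hc : cond hn σ <;>
    cases hsp : σ.2 (pP hn σ) <;> cases hsq : σ.2 (qP hn σ) <;>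
    simp [Nat.add_comm]

lemma invol_invol (hn : 2 ≤ n) (σ : BG n) : invol hn (invol hn σ) = σ := by
  have hfst : (invol hn (invol hn σ)).1 = σ.1 := by
    show Equiv.swap (zz hn) (oo hn) * (Equiv.swap (zz hn) (oo hn) * σ.1) = σ.1
    rw [← mul_assoc, Equiv.swap_mul_self, one_mul]
  have hsnd : (invol hn (invol hn σ)).2 = σ.2 := by
    funext i
    show (if cond hn (invol hn σ) then (invol hn σ).2 i
          else if i = pP hn (invol hn σ) ∨ i = qP hn (invol hn σ)
            then !(invol hn σ).2 i else (invol hn σ).2 i) = σ.2 i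
    rw [cond_invol, pP_invol, qP_invol]
    have hτ : (invol hn σ).2 i = if cond hn σ then σ.2 i
        else if i = pP hn σ ∨ i = qP hn σ then !σ.2 i else σ.2 i := rfl
    rw [hτ]
    cases hc : cond hn σ <;> by_cases hi : i = pP hn σ ∨ i = qP hn σ <;>
      simp [hi, or_comm, Bool.not_not]
  exact Prod.ext hfst hsnd

lemma wval_neg_iff (υ : BG n) (i : Fin n) : wval υ i < 0 ↔ υ.2 i = true := by
  have h0 : (0 : ℤ) ≤ ((υ.1 i).val : ℤ) := Int.natCast_nonneg _
  have hc : (υ.1 i : ℤ) = ((υ.1 i).val : ℤ) := rfl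
  unfold wval
  rw [hc]
  cases hb : υ.2 i <;> simp <;> omega

lemma nnegB_eq (υ : BG n) : nnegB υ = (univ.filter fun i : Fin n => υ.2 i = true).card := by
  unfold nnegB
  congr 1
  apply Finset.filter_congr
  intro i _
  exact wval_neg_iff υ i

lemma nneg_invol (hn : 2 ≤ n) (σ : BG n) (h : Even (nnegB σ)) :
    Even (nnegB (invol hn σ)) := by
  rw [nnegB_eq] at h ⊢
  cases hc : cond hn σ
  · -- signs flipped at pP and qP
    have key : (((univ.filter fun i : Fin n => (invol hn σ).2 i = true).card) +
        ((univ.filter fun i : Fin n => σ.2 i = true).card)) % 2 = 0 := by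
      rw [Finset.card_filter, Finset.card_filter, ← Finset.sum_add_distrib,
        Finset.sum_nat_mod]
      have hcong : ∀ i ∈ (univ : Finset (Fin n)),
          (((if (invol hn σ).2 i = true then 1 else 0) +
            (if σ.2 i = true then 1 else 0)) % 2) =
          (if i = pP hn σ ∨ i = qP hn σ then 1 else 0) := by
        intro i _
        have hτ : (invol hn σ).2 i = if cond hn σ then σ.2 i
            else if i = pP hn σ ∨ i = qP hn σ then !σ.2 i else σ.2 i := rfl
        rw [hτ, hc]
        by_cases hi : i = pP hn σ ∨ i = qP hn σ <;>
          cases hs : σ.2 i <;> simp [hi]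
      rw [Finset.sum_congr rfl hcong, ← Finset.card_filter]
      have : (univ.filter fun i : Fin n => i = pP hn σ ∨ i = qP hn σ) =
          {pP hn σ, qP hn σ} := by
        ext i; simp
      rw [this, Finset.card_pair (pP_ne_qP hn σ)]
    rw [Nat.even_iff] at h ⊢
    omega
  · -- signs unchanged
    have : ∀ i, (invol hn σ).2 i = σ.2 i := by
      intro i
      have hτ : (invol hn σ).2 i = if cond hn σ then σ.2 i
          else if i = pP hn σ ∨ i = qP hn σ then !σ.2 i else σ.2 i := rfl
      rw [hτ, hc]
      simp
    simpa [this] using h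

end DP

/-- the signed generating function of `(oinv, ensp)` over the even hyperoctahedral
group `D_n` vanishes -/
theorem signed_oinv_ensp_D_eq_zero (n : ℕ) (hn : 2 ≤ n)
    (R : Type*) [CommRing R] (x y : R) :
    ∑ σ ∈ univ.filter (fun σ : BG n => Even (nnegB σ)),
        (-1 : R) ^ lenD σ * x ^ oinvB σ * y ^ enspB σ = 0 := by
  apply Finset.sum_involution (fun σ _ => DP.invol hn σ)
  · intro σ hσ
    have hodd : Odd (lenD (DP.invol hn σ) + lenD σ) :=
      Nat.odd_iff.2 (DP.lenD_parity hn σ)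
    have h2 : (-1 : R) ^ lenD (DP.invol hn σ) * (-1 : R) ^ lenD σ = -1 := by
      rw [← pow_add]; exact Odd.neg_one_pow hodd
    have h3 : (-1 : R) ^ lenD σ * (-1 : R) ^ lenD σ = 1 := by
      rw [← pow_add]; exact Even.neg_one_pow ⟨lenD σ, rfl⟩
    have hsign : (-1 : R) ^ lenD (DP.invol hn σ) = -(-1 : R) ^ lenD σ := by
      linear_combination ((-1 : R) ^ lenD σ) * h2 -
        ((-1 : R) ^ lenD (DP.invol hn σ)) * h3
    rw [DP.oinv_eq hn σ, DP.ensp_eq hn σ, hsign]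
    ring
  · intro σ hσ _
    exact DP.invol_ne hn σ
  · intro σ hσ
    simp only [mem_filter, mem_univ, true_and] at hσ ⊢
    exact DP.nneg_invol hn σ hσ
  · intro σ hσ
    exact DP.invol_invol hn σ
end
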